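/- Let n ≥ 3 be an odd integer, let (V, μ) be an n-ary partially associative algebra over a field K of characteristic zero, and for k ≥ 1 define ∂^k : χ^k(V) → C^{k+n−1}(V) by ∂^k(φ) = (−1)^{k−1} μ • φ − φ • μ. Then the image of ∂^k is contained in χ^{k+n−1}(V), i.e., for every φ ∈ χ^k(V) the map ∂^k(φ) again satisfies (∂^kφ • μ) • μ = 0, (μ • ∂^kφ) • μ = 0, and μ • (∂^kφ • μ) = 0. -/

import Mathlib

/-!
Since `∂φ • μ = ±(μ • φ) • μ - (φ • μ) • μ` vanishes by hypothesis, the first and third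
conditions are immediate, and the second reduces to `μ • (μ • φ) = 0`. This follows from the
pre-Lie type identity `(f • G) • H = f{H, G} ± f{G, H} + f • (G • H)`, where the braces sum over
insertions of `G` and `H` into disjoint slots of `f`. Applied to `(μ, μ, φ)` and `(μ, φ, μ)`, it
gives `f{μ, φ} = ∓ f{φ, μ}` (using `μ • μ = 0`, `(μ • φ) • μ = 0` and `μ • (φ • μ) = 0`), and then
`μ • (μ • φ) = -f{φ, μ} ∓ f{μ, φ} = 0`.
-/

/-- The extension of a multilinear `k`-cochain on `V` to a function on sequences,
using only the first `k` entries of the sequence. -/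
def toCochain {K V : Type*} [Field K] [AddCommGroup V] [Module K V] {k : ℕ}
    (f : MultilinearMap K (fun _ : Fin k => V) V) : (ℕ → V) → V :=
  fun x => f fun j => x j.val

/-- The Gerstenhaber product of a `k`-cochain and an `l`-cochain (cochains are
represented as functions on sequences depending only on the first `k`, resp. `l`, entries;
sequences are `0`-indexed, so the sign `(-1)^{(i-1)(l-1)}` of the paper, `1 ≤ i ≤ k`,
becomes `(-1)^{i(l-1)}`, `0 ≤ i ≤ k-1`). -/
def gerst {V : Type*} [AddCommGroup V] (k l : ℕ) (f g : (ℕ → V) → V) : (ℕ → V) → V :=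
  fun x => ∑ i ∈ Finset.range k, ((-1 : ℤ) ^ (i * (l - 1))) •
    f fun j => if j < i then x j else if j = i then g (fun s => x (i + s)) else x (j + l - 1)

open Finset

theorem sum_range_add_split {M : Type*} [AddCommMonoid M]
    (g : ℕ → M) {a p : ℕ} (b : ℕ) (hp : p < a) :
    ∑ i ∈ range (a + b), g i
      = ∑ i ∈ range p, g i + ∑ m ∈ range (b + 1), g (p + m) + ∑ m ∈ Ico (p + 1) a, g (m + b) := by
  rw [← sum_range_add_sum_Ico _ (by omega : p ≤ a + b),
    ← sum_Ico_consecutive _ (by omega : p ≤ p + (b + 1)) (by omega : p + (b + 1) ≤ a + b),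
    sum_Ico_eq_sum_range, sum_Ico_add', Nat.add_sub_cancel_left, add_assoc,
    Nat.add_right_comm p 1 b, add_assoc p b 1]

section InsertAt

variable {V : Type*}

def insertAt (l : ℕ) (g : (ℕ → V) → V) (i : ℕ) (x : ℕ → V) : ℕ → V := fun j =>
  if j < i then x j else if j = i then g (fun s => x (i + s)) else x (j + l - 1)

def DependsOnFirst (m : ℕ) (G : (ℕ → V) → V) : Prop :=
  ∀ u v : ℕ → V, (∀ s < m, u s = v s) → G u = G v

theorem insertAt_insertAt_of_le {b c m : ℕ} (hm : m ≤ b) (G H : (ℕ → V) → V) (p : ℕ)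
    (x : ℕ → V) :
    insertAt (b + 1) G p (insertAt (c + 1) H (p + m) x)
      = insertAt (b + c + 1) (fun y => G (insertAt (c + 1) H m y)) p x := by
  funext j
  simp only [insertAt]
  split_ifs <;> first
    | rfl
    | omega
    | (congr 1; omega)
    | (congr 1; funext s; simp only [insertAt]
       split_ifs <;> first | rfl | omega | (congr 1; omega) | (congr 1; funext t; congr 1; omega))

theorem insertAt_comm_of_lt {b c p m : ℕ} (hpm : p < m) {G : (ℕ → V) → V}
    (hG : DependsOnFirst (b + 1) G) (H : (ℕ → V) → V) (x : ℕ → V) :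
    insertAt (b + 1) G p (insertAt (c + 1) H (m + b) x)
      = insertAt (c + 1) H m (insertAt (b + 1) G p x) := by
  funext j
  simp only [insertAt]
  split_ifs <;> first
    | rfl
    | omega
    | (congr 1; omega)
    | (apply hG; intro s hs; rw [if_pos (by omega)])
    | (congr 1; funext s; split_ifs <;> first | rfl | omega | (congr 1; omega))

end InsertAt

section Gerst

variable {V : Type*} [AddCommGroup V]

theorem gerst_apply (k l : ℕ) (f g : (ℕ → V) → V) (x : ℕ → V) :
    gerst k l f g x = ∑ i ∈ range k, ((-1 : ℤ) ^ (i * (l - 1))) • f (insertAt l g i x) :=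
  rfl

theorem gerst_zero_left (k l : ℕ) (g : (ℕ → V) → V) : gerst k l 0 g = 0 := by
  funext x
  simp [gerst_apply]

theorem gerst_sub_left (k l : ℕ) (f f' g : (ℕ → V) → V) :
    gerst k l (f - f') g = gerst k l f g - gerst k l f' g := by
  funext x
  simp only [gerst_apply, Pi.sub_apply, smul_sub, sum_sub_distrib]

theorem gerst_zsmul_left (k l : ℕ) (z : ℤ) (f g : (ℕ → V) → V) :
    gerst k l (z • f) g = z • gerst k l f g := by
  funext x
  simp only [gerst_apply, Pi.smul_apply, smul_sum, smul_comm z]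

theorem gerst_gerst_apply (a b c : ℕ) (f G H : (ℕ → V) → V) (x : ℕ → V) :
    gerst (a + b) (c + 1) (gerst a (b + 1) f G) H x
      = ∑ p ∈ range a, ∑ i ∈ range (a + b),
          ((-1 : ℤ) ^ (i * c + p * b)) • f (insertAt (b + 1) G p (insertAt (c + 1) H i x)) := by
  simp only [gerst_apply, Nat.add_sub_cancel, smul_sum, smul_smul, ← pow_add]
  exact sum_comm

/-- The brace `f{P, Q}`: `P` (arity `p + 1`) and `Q` (arity `q + 1`) inserted into slots
`u < w` of the `a`-ary `f`. -/
def brace (a p q : ℕ) (f P Q : (ℕ → V) → V) : (ℕ → V) → V := fun x =>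
  ∑ w ∈ range a, ∑ u ∈ range w,
    ((-1 : ℤ) ^ (u * p + w * q)) • f (insertAt (q + 1) Q w (insertAt (p + 1) P u x))

end Gerst

section Multilinear

variable {K V : Type*} [Field K] [AddCommGroup V] [Module K V] {a : ℕ}

theorem dependsOnFirst_toCochain (f : MultilinearMap K (fun _ : Fin a => V) V) :
    DependsOnFirst a (toCochain f) := fun u v h => by
  simp only [toCochain]
  congr 1
  funext j
  exact h j j.isLt

theorem toCochain_insertAt (f : MultilinearMap K (fun _ : Fin a => V) V) {i : ℕ} (hi : i < a)
    (l : ℕ) (g : (ℕ → V) → V) (x : ℕ → V) :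
    toCochain f (insertAt l g i x)
      = f.toLinearMap (fun j : Fin a => insertAt l 0 i x j) ⟨i, hi⟩ (g fun s => x (i + s)) := by
  rw [MultilinearMap.toLinearMap_apply, toCochain]
  congr 1
  funext j
  rcases eq_or_ne j ⟨i, hi⟩ with rfl | hj
  · simp [insertAt]
  · have hj' : (j : ℕ) ≠ i := fun h => hj (Fin.ext h)
    simp [Function.update_of_ne hj, insertAt, hj']

theorem gerst_toCochain_sub_right (l : ℕ) (f : MultilinearMap K (fun _ : Fin a => V) V)
    (g h : (ℕ → V) → V) :
    gerst a l (toCochain f) (g - h) = gerst a l (toCochain f) g - gerst a l (toCochain f) h := by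
  funext x
  simp only [gerst_apply, Pi.sub_apply, ← sum_sub_distrib, ← smul_sub]
  refine sum_congr rfl fun i hi => ?_
  simp only [toCochain_insertAt f (mem_range.1 hi), Pi.sub_apply, map_sub]

theorem gerst_toCochain_zsmul_right (l : ℕ) (z : ℤ) (f : MultilinearMap K (fun _ : Fin a => V) V)
    (g : (ℕ → V) → V) :
    gerst a l (toCochain f) (z • g) = z • gerst a l (toCochain f) g := by
  funext x
  simp only [gerst_apply, Pi.smul_apply, smul_sum]
  refine sum_congr rfl fun i hi => ?_
  simp only [toCochain_insertAt f (mem_range.1 hi), Pi.smul_apply, map_zsmul, smul_comm z]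

theorem gerst_toCochain_zero_right (l : ℕ) (f : MultilinearMap K (fun _ : Fin a => V) V) :
    gerst a l (toCochain f) 0 = 0 := by
  simpa using gerst_toCochain_sub_right l f 0 0

theorem gerst_toCochain_gerst_apply (b c : ℕ) (f : MultilinearMap K (fun _ : Fin a => V) V)
    (G H : (ℕ → V) → V) (x : ℕ → V) :
    gerst a (b + c + 1) (toCochain f) (gerst (b + 1) (c + 1) G H) x
      = ∑ p ∈ range a, ∑ m ∈ range (b + 1), ((-1 : ℤ) ^ (p * (b + c) + m * c)) •
          toCochain f (insertAt (b + c + 1) (fun y => G (insertAt (c + 1) H m y)) p x) := by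
  simp only [gerst_apply, Nat.add_sub_cancel]
  refine sum_congr rfl fun p hp => ?_
  simp only [toCochain_insertAt f (mem_range.1 hp), gerst_apply, Nat.add_sub_cancel, map_sum,
    map_zsmul, smul_sum, smul_smul, ← pow_add]

theorem gerst_gerst_toCochain_eq (b c : ℕ) (f : MultilinearMap K (fun _ : Fin a => V) V)
    {G : (ℕ → V) → V} (hG : DependsOnFirst (b + 1) G) (H : (ℕ → V) → V) :
    gerst (a + b) (c + 1) (gerst a (b + 1) (toCochain f) G) H
      = brace a c b (toCochain f) H G + ((-1 : ℤ) ^ (b * c)) • brace a b c (toCochain f) G H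
        + gerst a (b + c + 1) (toCochain f) (gerst (b + 1) (c + 1) G H) := by
  funext x
  rw [gerst_gerst_apply, Pi.add_apply, Pi.add_apply, Pi.smul_apply,
    gerst_toCochain_gerst_apply, brace, brace,
    sum_congr rfl fun p hp => sum_range_add_split _ b (mem_range.1 hp),
    sum_add_distrib, sum_add_distrib, add_right_comm]
  -- `H` lands before the slot `p` of `G` (giving `f{H, G}`), after it (`f{G, H}`) or inside it.
  congr 1
  · congr 1
    simp only [smul_sum]
    rw [sum_comm' (t' := range a) (s' := range) (fun p m => by
      simp only [mem_range, mem_Ico]; omega)]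
    refine sum_congr rfl fun m _ => sum_congr rfl fun p hp => ?_
    rw [insertAt_comm_of_lt (mem_range.1 hp) hG, smul_smul, ← pow_add]
    congr 2
    ring
  · refine sum_congr rfl fun p _ => sum_congr rfl fun m hm => ?_
    rw [insertAt_insertAt_of_le (Nat.lt_succ_iff.1 (mem_range.1 hm))]
    congr 2
    ring

theorem gerst_gerst_self_eq_zero {n k : ℕ} (hn : 1 ≤ n) (hk : 1 ≤ k)
    (μ : MultilinearMap K (fun _ : Fin n => V) V) (φ : MultilinearMap K (fun _ : Fin k => V) V)
    (hμ : gerst n n (toCochain μ) (toCochain μ) = 0)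
    (hμφμ : gerst (n + k - 1) n (gerst n k (toCochain μ) (toCochain φ)) (toCochain μ) = 0)
    (hμφμ' : gerst n (k + n - 1) (toCochain μ) (gerst k n (toCochain φ) (toCochain μ)) = 0) :
    gerst n (k + n - 1) (toCochain μ) (gerst n k (toCochain μ) (toCochain φ)) = 0 := by
  obtain ⟨n, rfl⟩ : ∃ m, n = m + 1 := ⟨n - 1, by omega⟩
  obtain ⟨k, rfl⟩ : ∃ m, k = m + 1 := ⟨k - 1, by omega⟩
  have h1 := gerst_gerst_toCochain_eq n k μ (dependsOnFirst_toCochain μ) (toCochain φ)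
  have h2 := gerst_gerst_toCochain_eq k n μ (dependsOnFirst_toCochain φ) (toCochain μ)
  rw [show k + 1 + (n + 1) - 1 = n + k + 1 by omega] at hμφμ' ⊢
  rw [show n + 1 + (k + 1) - 1 = n + 1 + k by omega] at hμφμ
  rw [hμ, gerst_zero_left] at h1
  rw [hμφμ, Nat.add_comm k n, hμφμ', Nat.mul_comm k n] at h2
  have hsign : (-1 : ℤ) ^ (n * k) * (-1) ^ (n * k) = 1 := by
    rw [← pow_add, Even.neg_one_pow ⟨_, rfl⟩]
  linear_combination (norm := module) -h1 + (-1 : ℤ) ^ (n * k) • h2 +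
    hsign • brace (n + 1) k n (toCochain μ) (toCochain φ) (toCochain μ)

end Multilinear

theorem partial_maps_chi_to_chi_general {K V : Type*} [Field K]
    [AddCommGroup V] [Module K V]
    (n : ℕ) (hn' : 3 ≤ n)
    (μ : MultilinearMap K (fun _ : Fin n => V) V)
    (hμ : gerst n n (toCochain μ) (toCochain μ) = 0)
    (k : ℕ) (hk : 1 ≤ k)
    (φ : MultilinearMap K (fun _ : Fin k => V) V)
    (hφ1 : gerst (k + n - 1) n (gerst k n (toCochain φ) (toCochain μ)) (toCochain μ) = 0)
    (hφ2 : gerst (n + k - 1) n (gerst n k (toCochain μ) (toCochain φ)) (toCochain μ) = 0)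
    (hφ3 : gerst n (k + n - 1) (toCochain μ) (gerst k n (toCochain φ) (toCochain μ)) = 0) :
    gerst ((k + n - 1) + n - 1) n
        (gerst (k + n - 1) n
          (((-1 : ℤ) ^ (k - 1)) • gerst n k (toCochain μ) (toCochain φ)
            - gerst k n (toCochain φ) (toCochain μ)) (toCochain μ)) (toCochain μ) = 0
    ∧ gerst (n + (k + n - 1) - 1) n
        (gerst n (k + n - 1) (toCochain μ)
          (((-1 : ℤ) ^ (k - 1)) • gerst n k (toCochain μ) (toCochain φ)
            - gerst k n (toCochain φ) (toCochain μ))) (toCochain μ) = 0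
    ∧ gerst n ((k + n - 1) + n - 1) (toCochain μ)
        (gerst (k + n - 1) n
          (((-1 : ℤ) ^ (k - 1)) • gerst n k (toCochain μ) (toCochain φ)
            - gerst k n (toCochain φ) (toCochain μ)) (toCochain μ)) = 0 := by
  have hμμφ := gerst_gerst_self_eq_zero (by omega) hk μ φ hμ hφ2 hφ3
  rw [Nat.add_comm n k] at hφ2
  have hleft : gerst (k + n - 1) n (((-1 : ℤ) ^ (k - 1)) • gerst n k (toCochain μ) (toCochain φ)
      - gerst k n (toCochain φ) (toCochain μ)) (toCochain μ) = 0 := by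
    rw [gerst_sub_left, gerst_zsmul_left, hφ2, hφ1, smul_zero, sub_zero]
  have hright : gerst n (k + n - 1) (toCochain μ) (((-1 : ℤ) ^ (k - 1)) •
      gerst n k (toCochain μ) (toCochain φ) - gerst k n (toCochain φ) (toCochain μ)) = 0 := by
    rw [gerst_toCochain_sub_right, gerst_toCochain_zsmul_right, hμμφ, hφ3, smul_zero, sub_zero]
  exact ⟨by rw [hleft, gerst_zero_left], by rw [hright, gerst_zero_left],
    by rw [hleft, gerst_toCochain_zero_right]⟩

/-- for odd `n ≥ 3` and an `n`-ary partially associative algebra `(V, μ)`,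
if `φ ∈ χ^k(V)` (i.e. `(φ•μ)•μ = 0`, `(μ•φ)•μ = 0` and `μ•(φ•μ) = 0`), then
`∂^k φ = (−1)^{k−1} μ•φ − φ•μ` again lies in `χ^{k+n−1}(V)`. -/
theorem partial_maps_chi_to_chi {K V : Type*} [Field K] [CharZero K]
    [AddCommGroup V] [Module K V]
    (n : ℕ) (hn : Odd n) (hn' : 3 ≤ n)
    (μ : MultilinearMap K (fun _ : Fin n => V) V)
    (hμ : gerst n n (toCochain μ) (toCochain μ) = 0)
    (k : ℕ) (hk : 1 ≤ k)
    (φ : MultilinearMap K (fun _ : Fin k => V) V)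
    (hφ1 : gerst (k + n - 1) n (gerst k n (toCochain φ) (toCochain μ)) (toCochain μ) = 0)
    (hφ2 : gerst (n + k - 1) n (gerst n k (toCochain μ) (toCochain φ)) (toCochain μ) = 0)
    (hφ3 : gerst n (k + n - 1) (toCochain μ) (gerst k n (toCochain φ) (toCochain μ)) = 0) :
    gerst ((k + n - 1) + n - 1) n
        (gerst (k + n - 1) n
          (((-1 : ℤ) ^ (k - 1)) • gerst n k (toCochain μ) (toCochain φ)
            - gerst k n (toCochain φ) (toCochain μ)) (toCochain μ)) (toCochain μ) = 0
    ∧ gerst (n + (k + n - 1) - 1) n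
        (gerst n (k + n - 1) (toCochain μ)
          (((-1 : ℤ) ^ (k - 1)) • gerst n k (toCochain μ) (toCochain φ)
            - gerst k n (toCochain φ) (toCochain μ))) (toCochain μ) = 0
    ∧ gerst n ((k + n - 1) + n - 1) (toCochain μ)
        (gerst (k + n - 1) n
          (((-1 : ℤ) ^ (k - 1)) • gerst n k (toCochain μ) (toCochain φ)
            - gerst k n (toCochain φ) (toCochain μ)) (toCochain μ)) = 0 :=
  partial_maps_chi_to_chi_general n hn' μ hμ k hk φ hφ1 hφ2 hφ3
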